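/- Let D be a self-crossing diagram of an r-component link, i.e., n i ≥ 1 for every i : Fin r. Then d(D) + d(-D) + r ≤ c(D). Moreover, equality holds if and only if D has property C. -/

import Mathlib

/-- A Gauss word on `n` labels: each label occurs exactly twice,
once with flag `true` (over-passage) and once with flag `false` (under-passage). -/
def IsGaussWord {n : ℕ} (W : List (Fin n × Bool)) : Prop :=
  ∀ i : Fin n, W.count (i, true) = 1 ∧ W.count (i, false) = 1

/-- Based warping degree: the number of labels whose first occurrence carries flag `false`. -/
def basedWd {n : ℕ} (W : List (Fin n × Bool)) : ℕ :=
  (Finset.univ.filter fun i : Fin n =>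
    W.idxOf (i, false) < W.idxOf (i, true)).card

/-- Warping degree of a Gauss word: minimum of the based warping degree
over all cyclic rotations. -/
noncomputable def wd {n : ℕ} (W : List (Fin n × Bool)) : ℕ :=
  sInf {v | ∃ k : ℕ, v = basedWd (W.rotate k)}

/-- A Gauss word is alternating if the flags of consecutive entries alternate. -/
def IsAlternating {n : ℕ} (W : List (Fin n × Bool)) : Prop :=
  W.Chain' fun x y => y.2 = !x.2

/-- Based linking warping degree for the ordering given by `σ`
(component `i` precedes `j` when `σ i < σ j`). -/
def ldSigma {r : ℕ} (m : Fin r → Fin r → ℕ) (σ : Equiv.Perm (Fin r)) : ℕ :=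
  ∑ p ∈ Finset.univ.filter (fun p : Fin r × Fin r => σ p.1 < σ p.2), m p.1 p.2

/-- Linking warping degree: minimum over all orderings. -/
noncomputable def linkLd {r : ℕ} (m : Fin r → Fin r → ℕ) : ℕ :=
  sInf {v | ∃ σ : Equiv.Perm (Fin r), v = ldSigma m σ}

/-- Linking crossing number: number of non-self crossings. -/
def lcNum {r : ℕ} (m : Fin r → Fin r → ℕ) : ℕ :=
  ∑ p ∈ Finset.univ.filter (fun p : Fin r × Fin r => p.1 ≠ p.2), m p.1 p.2

/-- Warping degree of an ordered link diagram: minimum over all orderings `σ`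
and all choices of cyclic rotations (base points) of the components. -/
noncomputable def linkWd {r : ℕ} {n : Fin r → ℕ} (W : ∀ i, List (Fin (n i) × Bool))
    (m : Fin r → Fin r → ℕ) : ℕ :=
  sInf {v | ∃ (σ : Equiv.Perm (Fin r)) (k : Fin r → ℕ),
    v = (∑ i, basedWd ((W i).rotate (k i))) + ldSigma m σ}

/-- Crossing number of the link diagram. -/
def crossingNum {r : ℕ} (n : Fin r → ℕ) (m : Fin r → Fin r → ℕ) : ℕ :=
  (∑ i, n i) + ∑ p ∈ Finset.univ.filter (fun p : Fin r × Fin r => p.1 < p.2),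
    (m p.1 p.2 + m p.2 p.1)

/-- The number of components having at least one self-crossing. -/
def srNum {r : ℕ} (n : Fin r → ℕ) : ℕ :=
  (Finset.univ.filter fun i : Fin r => 1 ≤ n i).card

/-- Property C: every component word is alternating and, for each pair of distinct
components, the number of over-crossings equals the number of under-crossings. -/
def PropertyC {r : ℕ} {n : Fin r → ℕ} (W : ∀ i, List (Fin (n i) × Bool))
    (m : Fin r → Fin r → ℕ) : Prop :=
  (∀ i, IsAlternating (W i)) ∧ ∀ i j : Fin r, i ≠ j → m i j = m j i


/-!
Rotating a Gauss word by one letter moves its first letter to the end, which changes the based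
warping degree by `+1` if that letter is an over-passage and by `-1` if it is an under-passage,
while reversing the word turns a based warping degree `b` into `n - b`. Hence
`d(W) + d(-W) = n - (max - min)`, the extrema being taken over all base points. The based
warping degrees along the cyclic rotations form a walk with steps `±1`, so `max - min ≥ 1`, with
equality exactly when consecutive steps cancel, i.e. when `W` is alternating.

For the linking part, reversing an ordering `σ` gives `ld_σ + ld_{rev σ} = lc`, so `2 ld ≤ lc`.
Equality forces `ld_σ` to be independent of `σ`, and exchanging two components `i, j` that are
adjacent in `σ` changes `ld_σ` by `m j i - m i j`. As `d(D) = Σ d(W^i) + ld(D)` and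
`c(D) = Σ n_i + lc`, the two estimates add up.
-/

open Finset

theorem List.Nodup.idxOf_reverse {α : Type*} [BEq α] [LawfulBEq α] {l : List α} {a : α}
    (hl : l.Nodup) (ha : a ∈ l) : l.reverse.idxOf a = l.length - 1 - l.idxOf a := by
  have hi := List.idxOf_lt_length_of_mem ha
  have hlast : l.length - 1 - l.idxOf a < l.reverse.length := by rw [List.length_reverse]; omega
  have hget : l.reverse[l.length - 1 - l.idxOf a] = a := by
    have : l.length - 1 - (l.length - 1 - l.idxOf a) = l.idxOf a := by omega
    simp only [List.getElem_reverse, this, List.getElem_idxOf]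
  conv_lhs => rw [← hget]
  exact (List.nodup_reverse.mpr hl).idxOf_getElem _ hlast

theorem Finset.card_filter_eq_card_filter_add_one {α : Type*} [Fintype α] {P Q : α → Prop}
    [DecidablePred P] [DecidablePred Q] {a : α} (hQ : Q a) (hP : ¬P a)
    (h : ∀ x, x ≠ a → (Q x ↔ P x)) : #{x | Q x} = #{x | P x} + 1 := by
  classical
  have : univ.filter Q = insert a (univ.filter P) := by
    ext x
    by_cases hx : x = a
    · simp [hx, hQ]
    · simp [hx, h x hx]
  rw [this, card_insert_of_notMem (by simp [hP])]

def passageSign : Bool → ℤ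
  | true => 1
  | false => -1

theorem idxOf_lt_idxOf_cons_self_iff {n : ℕ} {p : Fin n} {b : Bool} {T : List (Fin n × Bool)} :
    ((p, b) :: T).idxOf (p, false) < ((p, b) :: T).idxOf (p, true) ↔ b = false := by
  cases b <;> simp [List.idxOf_cons_ne]

theorem wd_le_basedWd_rotate {n : ℕ} (W : List (Fin n × Bool)) (k : ℕ) :
    wd W ≤ basedWd (W.rotate k) :=
  Nat.sInf_le ⟨k, rfl⟩

theorem exists_basedWd_rotate_eq_wd {n : ℕ} (W : List (Fin n × Bool)) :
    ∃ k, basedWd (W.rotate k) = wd W := by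
  obtain ⟨k, hk⟩ :=
    Nat.sInf_mem (⟨_, 0, rfl⟩ : {v | ∃ k, v = basedWd (W.rotate k)}.Nonempty)
  exact ⟨k, hk.symm⟩

namespace IsAlternating

variable {n : ℕ} {a : Fin n × Bool} {T W : List (Fin n × Bool)}

theorem snd_eq_not_snd {b : Fin n × Bool} (h : IsAlternating (a :: b :: T)) : b.2 = !a.2 :=
  ((List.isChain_cons_cons (R := fun x y : Fin n × Bool => y.2 = !x.2)).mp h).1

theorem snd_last_eq_not_snd_head :
    ∀ {a z : Fin n × Bool} {T : List (Fin n × Bool)},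
      IsAlternating (a :: (T ++ [z])) → Even T.length → z.2 = !a.2
  | _, _, [], h, _ => snd_eq_not_snd h
  | _, _, [_], _, he => by simp at he
  | a, z, b :: c :: T, h, he => by
    have hb : IsAlternating (b :: c :: (T ++ [z])) := h.tail
    have hc : IsAlternating (c :: (T ++ [z])) := hb.tail
    rw [snd_last_eq_not_snd_head hc (by simpa [Nat.even_add_one] using he),
      hb.snd_eq_not_snd, h.snd_eq_not_snd, Bool.not_not]

theorem rotate_one (h : IsAlternating (a :: T)) (he : Even (a :: T).length) :
    IsAlternating (T ++ [a]) := by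
  rcases List.eq_nil_or_concat T with rfl | ⟨T, z, rfl⟩
  · exact List.isChain_singleton a
  · rw [List.concat_eq_append] at h he ⊢
    have hz := snd_last_eq_not_snd_head h (by simpa [Nat.even_add_one] using he)
    refine List.isChain_append.mpr ⟨h.tail, List.isChain_singleton a, ?_⟩
    simp [hz]

theorem rotate (h : IsAlternating W) (he : Even W.length) (k : ℕ) :
    IsAlternating (W.rotate k) := by
  induction k with
  | zero => simpa using h
  | succ k ih =>
    rw [← List.rotate_rotate]
    rcases hk : W.rotate k with _ | ⟨a, T⟩
    · exact List.isChain_nil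
    · rw [hk] at ih
      rw [List.rotate_cons_succ, List.rotate_zero]
      exact ih.rotate_one (by rw [← hk, List.length_rotate]; exact he)

end IsAlternating

namespace IsGaussWord

variable {n : ℕ} {W : List (Fin n × Bool)} {p : Fin n} {b : Bool} {T : List (Fin n × Bool)}

theorem count_eq_one (hW : IsGaussWord W) (a : Fin n × Bool) : W.count a = 1 := by
  obtain ⟨i, _ | _⟩ := a
  exacts [(hW i).2, (hW i).1]

theorem mem (hW : IsGaussWord W) (a : Fin n × Bool) : a ∈ W :=
  List.count_pos_iff.mp (by simp [hW.count_eq_one])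

theorem nodup (hW : IsGaussWord W) : W.Nodup :=
  List.nodup_iff_count_le_one.mpr fun a => (hW.count_eq_one a).le

theorem length_eq (hW : IsGaussWord W) : W.length = 2 * n := by
  classical
  have : W.toFinset = univ := eq_univ_of_forall fun a => List.mem_toFinset.mpr (hW.mem a)
  rw [← List.toFinset_card_of_nodup hW.nodup, this, card_univ, Fintype.card_prod,
    Fintype.card_fin, Fintype.card_bool, mul_comm]

theorem rotate (hW : IsGaussWord W) (k : ℕ) : IsGaussWord (W.rotate k) := fun i => by
  simpa only [(W.rotate_perm k).count_eq] using hW i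

theorem reverse (hW : IsGaussWord W) : IsGaussWord W.reverse := fun i => by
  simpa only [List.count_reverse] using hW i

theorem mem_of_ne (h : IsGaussWord ((p, b) :: T)) {a : Fin n × Bool} (ha : a ≠ (p, b)) :
    a ∈ T :=
  (List.mem_cons.mp (h.mem a)).resolve_left ha

theorem notMem (h : IsGaussWord ((p, b) :: T)) : (p, b) ∉ T :=
  (List.nodup_cons.mp h.nodup).1

theorem idxOf_lt_idxOf_append_iff (h : IsGaussWord ((p, b) :: T)) {i : Fin n} (hi : i ≠ p) :
    (T ++ [(p, b)]).idxOf (i, false) < (T ++ [(p, b)]).idxOf (i, true) ↔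
      ((p, b) :: T).idxOf (i, false) < ((p, b) :: T).idxOf (i, true) := by
  have hne : ∀ c, (i, c) ≠ (p, b) := fun c hc => hi (congrArg Prod.fst hc)
  rw [List.idxOf_append_of_mem (h.mem_of_ne (hne false)),
    List.idxOf_append_of_mem (h.mem_of_ne (hne true)),
    List.idxOf_cons_ne _ (hne false).symm, List.idxOf_cons_ne _ (hne true).symm]
  omega

theorem idxOf_lt_idxOf_append_self_iff (h : IsGaussWord ((p, b) :: T)) :
    (T ++ [(p, b)]).idxOf (p, false) < (T ++ [(p, b)]).idxOf (p, true) ↔ b = true := by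
  have hmem : (p, !b) ∈ T := h.mem_of_ne (by simp)
  have hlt := List.idxOf_lt_length_of_mem hmem
  cases b <;>
    simp_all [List.idxOf_append_of_mem, List.idxOf_append_of_notMem h.notMem, List.idxOf_le_length]

theorem basedWd_rotate_one {a : Fin n × Bool} (h : IsGaussWord (a :: T)) :
    (basedWd (T ++ [a]) : ℤ) = basedWd (a :: T) + passageSign a.2 := by
  obtain ⟨p, _ | _⟩ := a
  · have : basedWd ((p, false) :: T) = basedWd (T ++ [(p, false)]) + 1 :=
      card_filter_eq_card_filter_add_one (idxOf_lt_idxOf_cons_self_iff.mpr rfl)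
        (by simp [h.idxOf_lt_idxOf_append_self_iff]) fun i hi =>
          (h.idxOf_lt_idxOf_append_iff hi).symm
    simp only [passageSign]
    omega
  · have : basedWd (T ++ [(p, true)]) = basedWd ((p, true) :: T) + 1 :=
      card_filter_eq_card_filter_add_one (h.idxOf_lt_idxOf_append_self_iff.mpr rfl)
        (by simp) fun i hi => h.idxOf_lt_idxOf_append_iff hi
    simp only [passageSign]
    omega

theorem exists_rotate_eq_cons_cons (hW : IsGaussWord W) (hn : 0 < n) (k : ℕ) :
    ∃ a b T, W.rotate k = a :: b :: T := by
  have hlen : 2 ≤ (W.rotate k).length := by rw [List.length_rotate, hW.length_eq]; omega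
  rcases hk : W.rotate k with _ | ⟨a, _ | ⟨b, T⟩⟩
  all_goals simp only [hk, List.length_nil, List.length_singleton] at hlen
  · omega
  · omega
  · exact ⟨a, b, T, rfl⟩

theorem basedWd_add_basedWd_reverse (hW : IsGaussWord W) : basedWd W + basedWd W.reverse = n := by
  have key : ∀ i : Fin n, W.reverse.idxOf (i, false) < W.reverse.idxOf (i, true) ↔
      ¬W.idxOf (i, false) < W.idxOf (i, true) := by
    intro i
    have hf := List.idxOf_lt_length_of_mem (hW.mem (i, false))
    have ht := List.idxOf_lt_length_of_mem (hW.mem (i, true))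
    have hne : W.idxOf (i, false) ≠ W.idxOf (i, true) := by
      simp [List.idxOf_inj (hW.mem (i, false))]
    rw [hW.nodup.idxOf_reverse (hW.mem _), hW.nodup.idxOf_reverse (hW.mem _)]
    omega
  rw [basedWd, basedWd, filter_congr fun i _ => key i, card_filter_add_card_filter_not,
    card_univ, Fintype.card_fin]

theorem wd_reverse_add_basedWd_rotate_le (hW : IsGaussWord W) (k : ℕ) :
    wd W.reverse + basedWd (W.rotate k) ≤ n := by
  have hle := wd_le_basedWd_rotate W.reverse (W.length - k % W.length)
  rw [← List.reverse_rotate] at hle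
  have := (hW.rotate k).basedWd_add_basedWd_reverse
  omega

theorem exists_wd_reverse_add_basedWd_rotate_eq (hW : IsGaussWord W) :
    ∃ k, wd W.reverse + basedWd (W.rotate k) = n := by
  obtain ⟨k, hk⟩ := exists_basedWd_rotate_eq_wd W.reverse
  rw [List.rotate_reverse] at hk
  have := (hW.rotate (W.length - k % W.length)).basedWd_add_basedWd_reverse
  exact ⟨W.length - k % W.length, by omega⟩

theorem basedWd_rotate_succ (hW : IsGaussWord W) {k : ℕ} {a : Fin n × Bool}
    {T : List (Fin n × Bool)} (h : W.rotate k = a :: T) :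
    (basedWd (W.rotate (k + 1)) : ℤ) = basedWd (W.rotate k) + passageSign a.2 := by
  have hT : W.rotate (k + 1) = T ++ [a] := by
    rw [← List.rotate_rotate, h, List.rotate_cons_succ, List.rotate_zero]
  have hW' := hW.rotate k
  rw [h] at hW' ⊢
  rw [hT]
  exact hW'.basedWd_rotate_one

theorem basedWd_rotate_add_two (hW : IsGaussWord W) {k : ℕ} {a b : Fin n × Bool}
    {T : List (Fin n × Bool)} (h : W.rotate k = a :: b :: T) :
    (basedWd (W.rotate (k + 2)) : ℤ) =
      basedWd (W.rotate k) + passageSign a.2 + passageSign b.2 := by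
  have h' : W.rotate (k + 1) = b :: (T ++ [a]) := by
    rw [← List.rotate_rotate, h, List.rotate_cons_succ, List.rotate_zero, List.cons_append]
  rw [hW.basedWd_rotate_succ h', hW.basedWd_rotate_succ h]

theorem basedWd_rotate_succ_eq_add_one_or (hW : IsGaussWord W) (hn : 0 < n) (k : ℕ) :
    basedWd (W.rotate (k + 1)) = basedWd (W.rotate k) + 1 ∨
      basedWd (W.rotate k) = basedWd (W.rotate (k + 1)) + 1 := by
  obtain ⟨⟨p, b⟩, _, T, h⟩ := hW.exists_rotate_eq_cons_cons hn k
  have hstep := hW.basedWd_rotate_succ h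
  cases b <;> simp only [passageSign] at hstep <;> omega

theorem exists_basedWd_rotate_eq_wd_add_one (hW : IsGaussWord W) (hn : 0 < n) :
    ∃ k, basedWd (W.rotate k) = wd W + 1 := by
  obtain ⟨k, hk⟩ := exists_basedWd_rotate_eq_wd W
  have := hW.basedWd_rotate_succ_eq_add_one_or hn k
  have := wd_le_basedWd_rotate W (k + 1)
  exact ⟨k + 1, by omega⟩

theorem isAlternating_of_forall_basedWd_rotate_le (hW : IsGaussWord W)
    (h : ∀ k, basedWd (W.rotate k) ≤ wd W + 1) : IsAlternating W := by
  refine List.isChain_iff_forall_rel_of_append_cons_cons.mpr fun a b l₁ l₂ hl => ?_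
  have hrot : W.rotate l₁.length = a :: b :: (l₂ ++ l₁) := by
    rw [hl, List.rotate_append_length_eq, List.cons_append, List.cons_append]
  have h2 := hW.basedWd_rotate_add_two hrot
  have := h l₁.length
  have := h (l₁.length + 2)
  have := wd_le_basedWd_rotate W l₁.length
  have := wd_le_basedWd_rotate W (l₁.length + 2)
  obtain ⟨_, _ | _⟩ := a <;> obtain ⟨_, _ | _⟩ := b <;>
    simp only [passageSign, Bool.not_false, Bool.not_true] at h2 ⊢ <;> omega

theorem basedWd_rotate_le_of_isAlternating (hW : IsGaussWord W) (hn : 0 < n)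
    (halt : IsAlternating W) (k : ℕ) : basedWd (W.rotate k) ≤ wd W + 1 := by
  have heven : Even W.length := by rw [hW.length_eq]; exact even_two_mul n
  have hperiod : ∀ k, basedWd (W.rotate (k + 2)) = basedWd (W.rotate k) := by
    intro k
    obtain ⟨⟨p, c⟩, b, T, h⟩ := hW.exists_rotate_eq_cons_cons hn k
    have hb : b.2 = !c := (h ▸ halt.rotate heven k).snd_eq_not_snd
    have := hW.basedWd_rotate_add_two h
    rw [hb] at this
    cases c <;> simp only [passageSign, Bool.not_false, Bool.not_true] at this <;> omega
  have htwo : ∀ k, basedWd (W.rotate k) = basedWd (W.rotate 0) ∨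
      basedWd (W.rotate k) = basedWd (W.rotate 1) := by
    have hevery : ∀ j i, basedWd (W.rotate (i + 2 * j)) = basedWd (W.rotate i) := by
      intro j i
      induction j with
      | zero => rfl
      | succ j ih => rw [mul_add, ← add_assoc, mul_one, hperiod, ih]
    intro k
    rw [← Nat.mod_add_div k 2, hevery]
    rcases Nat.mod_two_eq_zero_or_one k with h | h <;> simp [h]
  obtain ⟨k₀, hk₀⟩ := exists_basedWd_rotate_eq_wd W
  have := htwo k
  have := htwo k₀
  have := hW.basedWd_rotate_succ_eq_add_one_or hn 0
  rw [zero_add] at this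
  omega

theorem wd_add_wd_reverse_add_one_le (hW : IsGaussWord W) (hn : 0 < n) :
    wd W + wd W.reverse + 1 ≤ n := by
  obtain ⟨k, hk⟩ := hW.exists_basedWd_rotate_eq_wd_add_one hn
  have := hW.wd_reverse_add_basedWd_rotate_le k
  omega

theorem wd_add_wd_reverse_add_one_eq_iff (hW : IsGaussWord W) (hn : 0 < n) :
    wd W + wd W.reverse + 1 = n ↔ IsAlternating W := by
  obtain ⟨k₀, hk₀⟩ := hW.exists_wd_reverse_add_basedWd_rotate_eq
  have hle := hW.wd_add_wd_reverse_add_one_le hn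
  constructor
  · intro h
    refine hW.isAlternating_of_forall_basedWd_rotate_le fun k => ?_
    have := hW.wd_reverse_add_basedWd_rotate_le k
    omega
  · intro halt
    have := hW.basedWd_rotate_le_of_isAlternating hn halt k₀
    omega

end IsGaussWord

section Linking

variable {r : ℕ} (m : Fin r → Fin r → ℕ)

theorem ldSigma_trans_revPerm (σ : Equiv.Perm (Fin r)) :
    ldSigma m (σ.trans Fin.revPerm) =
      ∑ p ∈ univ.filter (fun p : Fin r × Fin r => σ p.2 < σ p.1), m p.1 p.2 := by
  refine sum_congr (filter_congr fun p _ => ?_) fun _ _ => rfl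
  simp only [Equiv.trans_apply, Fin.revPerm_apply, Fin.rev_lt_rev]

theorem ldSigma_trans_revPerm_eq_sum_swap (σ : Equiv.Perm (Fin r)) :
    ldSigma m (σ.trans Fin.revPerm) =
      ∑ p ∈ univ.filter (fun p : Fin r × Fin r => σ p.1 < σ p.2), m p.2 p.1 := by
  rw [ldSigma_trans_revPerm]
  exact sum_nbij' Prod.swap Prod.swap (by simp) (by simp) (by simp) (by simp) (by simp)

theorem ldSigma_add_ldSigma_trans_revPerm (σ : Equiv.Perm (Fin r)) :
    ldSigma m σ + ldSigma m (σ.trans Fin.revPerm) = lcNum m := by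
  classical
  rw [ldSigma_trans_revPerm, ldSigma,
    ← sum_union (disjoint_filter.mpr fun _ _ h => lt_asymm h), ← filter_or, lcNum]
  refine sum_congr (filter_congr fun p _ => ?_) fun _ _ => rfl
  rw [lt_or_lt_iff_ne, σ.injective.ne_iff]

theorem crossingNum_eq (n : Fin r → ℕ) : crossingNum n m = ∑ i, n i + lcNum m := by
  rw [crossingNum, sum_add_distrib, ← ldSigma_add_ldSigma_trans_revPerm m (Equiv.refl _),
    ldSigma_trans_revPerm_eq_sum_swap]
  rfl

theorem linkLd_le_ldSigma (σ : Equiv.Perm (Fin r)) : linkLd m ≤ ldSigma m σ :=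
  Nat.sInf_le ⟨σ, rfl⟩

theorem exists_ldSigma_eq_linkLd : ∃ σ, ldSigma m σ = linkLd m := by
  obtain ⟨σ, hσ⟩ := Nat.sInf_mem (⟨_, 1, rfl⟩ : {v | ∃ σ, v = ldSigma m σ}.Nonempty)
  exact ⟨σ, hσ.symm⟩

theorem two_mul_linkLd_le : 2 * linkLd m ≤ lcNum m := by
  have := ldSigma_add_ldSigma_trans_revPerm m (Equiv.refl _)
  have := linkLd_le_ldSigma m (Equiv.refl _)
  have := linkLd_le_ldSigma m ((Equiv.refl _).trans Fin.revPerm)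
  omega

theorem ldSigma_eq_linkLd_of_two_mul_linkLd_eq (h : 2 * linkLd m = lcNum m)
    (σ : Equiv.Perm (Fin r)) : ldSigma m σ = linkLd m := by
  have := ldSigma_add_ldSigma_trans_revPerm m σ
  have := linkLd_le_ldSigma m σ
  have := linkLd_le_ldSigma m (σ.trans Fin.revPerm)
  omega

theorem two_mul_linkLd_eq_of_symm (hsym : ∀ i j, i ≠ j → m i j = m j i) :
    2 * linkLd m = lcNum m := by
  obtain ⟨σ, hσ⟩ := exists_ldSigma_eq_linkLd m
  have hrev : ldSigma m (σ.trans Fin.revPerm) = ldSigma m σ := by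
    rw [ldSigma_trans_revPerm_eq_sum_swap]
    refine sum_congr rfl fun p hp => (hsym _ _ fun he => ?_).symm
    simp [he] at hp
  have := ldSigma_add_ldSigma_trans_revPerm m σ
  omega

end Linking

theorem lt_swap_zero_one_iff {r : ℕ} (u v : Fin (r + 2)) :
    Equiv.swap 0 1 u < Equiv.swap 0 1 v ↔ u = 1 ∧ v = 0 ∨ u < v ∧ ¬(u = 0 ∧ v = 1) := by
  rw [Equiv.swap_apply_def, Equiv.swap_apply_def]
  split_ifs <;> simp only [Fin.lt_def, Fin.ext_iff, Fin.val_zero, Fin.val_one] at * <;> omega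

theorem ldSigma_add_eq_ldSigma_trans_swap_add {r : ℕ} (m : Fin (r + 2) → Fin (r + 2) → ℕ)
    {σ : Equiv.Perm (Fin (r + 2))} {i j : Fin (r + 2)} (hi : σ i = 0) (hj : σ j = 1) :
    ldSigma m σ + m j i = ldSigma m (σ.trans (Equiv.swap 0 1)) + m i j := by
  classical
  have hi' : ∀ a, σ a = 0 ↔ a = i := fun a => by rw [← hi, σ.injective.eq_iff]
  have hj' : ∀ a, σ a = 1 ↔ a = j := fun a => by rw [← hj, σ.injective.eq_iff]
  have hset : (univ.filter fun p : Fin (r + 2) × Fin (r + 2) =>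
        σ.trans (Equiv.swap 0 1) p.1 < σ.trans (Equiv.swap 0 1) p.2) =
      insert (j, i) ((univ.filter fun p : Fin (r + 2) × Fin (r + 2) => σ p.1 < σ p.2).erase
        (i, j)) := by
    ext ⟨a, b⟩
    simp only [Equiv.trans_apply, lt_swap_zero_one_iff, hi', hj', mem_insert, mem_erase,
      mem_filter, mem_univ, true_and, Prod.mk.injEq, ne_eq]
    tauto
  have hmem : (i, j) ∈ univ.filter fun p : Fin (r + 2) × Fin (r + 2) => σ p.1 < σ p.2 := by
    simp only [mem_filter, mem_univ, true_and, hi, hj]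
    exact Fin.zero_lt_one
  rw [ldSigma, ldSigma, hset, sum_insert (by simp [hi, hj]), ← add_sum_erase _ _ hmem]
  dsimp only
  omega

theorem exists_perm_apply_eq_zero_and_eq_one {r : ℕ} {i j : Fin (r + 2)} (hij : i ≠ j) :
    ∃ σ : Equiv.Perm (Fin (r + 2)), σ i = 0 ∧ σ j = 1 := by
  have hj : Equiv.swap i 0 j ≠ 0 := by
    simpa using (Equiv.swap i 0).injective.ne hij.symm
  refine ⟨(Equiv.swap i 0).trans (Equiv.swap (Equiv.swap i 0 j) 1), ?_, ?_⟩
  · simp [Equiv.swap_apply_of_ne_of_ne hj.symm zero_ne_one]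
  · simp

theorem symm_of_two_mul_linkLd_eq {r : ℕ} {m : Fin r → Fin r → ℕ}
    (h : 2 * linkLd m = lcNum m) {i j : Fin r} (hij : i ≠ j) : m i j = m j i := by
  obtain ⟨r, rfl⟩ : ∃ k, r = k + 2 := ⟨r - 2, by
    have := Fin.val_injective.ne hij
    omega⟩
  obtain ⟨σ, hi, hj⟩ := exists_perm_apply_eq_zero_and_eq_one hij
  have := ldSigma_add_eq_ldSigma_trans_swap_add m hi hj
  simp only [ldSigma_eq_linkLd_of_two_mul_linkLd_eq m h] at this
  omega

theorem two_mul_linkLd_eq_iff {r : ℕ} (m : Fin r → Fin r → ℕ) :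
    2 * linkLd m = lcNum m ↔ ∀ i j, i ≠ j → m i j = m j i :=
  ⟨fun h _ _ => symm_of_two_mul_linkLd_eq h, two_mul_linkLd_eq_of_symm m⟩

theorem linkWd_eq_sum_wd_add_linkLd {r : ℕ} {n : Fin r → ℕ}
    (W : ∀ i, List (Fin (n i) × Bool)) (m : Fin r → Fin r → ℕ) :
    linkWd W m = ∑ i, wd (W i) + linkLd m := by
  choose k hk using fun i => exists_basedWd_rotate_eq_wd (W i)
  obtain ⟨σ, hσ⟩ := exists_ldSigma_eq_linkLd m
  refine le_antisymm (Nat.sInf_le ⟨σ, k, by simp only [hk, hσ]⟩) ?_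
  obtain ⟨σ', k', h'⟩ := Nat.sInf_mem (⟨_, σ, k, rfl⟩ : {v | ∃ (σ : Equiv.Perm (Fin r))
    (k : Fin r → ℕ), v = (∑ i, basedWd ((W i).rotate (k i))) + ldSigma m σ}.Nonempty)
  rw [linkWd, h']
  exact add_le_add (sum_le_sum fun i _ => wd_le_basedWd_rotate _ _) (linkLd_le_ldSigma m σ')

theorem warping_degree_sum_self_crossing_general (r : ℕ) (n : Fin r → ℕ)
    (W : ∀ i, List (Fin (n i) × Bool)) (m : Fin r → Fin r → ℕ)
    (hW : ∀ i, IsGaussWord (W i))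
    (hself : ∀ i, 1 ≤ n i) :
    linkWd W m + linkWd (fun i => (W i).reverse) m + r ≤ crossingNum n m ∧
    (linkWd W m + linkWd (fun i => (W i).reverse) m + r = crossingNum n m ↔
      PropertyC W m) := by
  have hcomp : ∀ i ∈ univ, wd (W i) + wd (W i).reverse + 1 ≤ n i :=
    fun i _ => (hW i).wd_add_wd_reverse_add_one_le (hself i)
  have hlink := two_mul_linkLd_le m
  have hsplit : linkWd W m + linkWd (fun i => (W i).reverse) m + r =
      ∑ i, (wd (W i) + wd (W i).reverse + 1) + 2 * linkLd m := by
    simp only [linkWd_eq_sum_wd_add_linkLd, sum_add_distrib, sum_const, card_univ,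
      Fintype.card_fin, smul_eq_mul, mul_one]
    ring
  rw [hsplit, crossingNum_eq]
  refine ⟨add_le_add (sum_le_sum hcomp) hlink, ?_⟩
  rw [add_eq_add_iff_eq_and_eq (sum_le_sum hcomp) hlink, sum_eq_sum_iff_of_le hcomp,
    two_mul_linkLd_eq_iff, PropertyC]
  simp only [mem_univ, forall_const]
  exact and_congr_left' (forall_congr' fun i => (hW i).wd_add_wd_reverse_add_one_eq_iff (hself i))

/-- for a self-crossing diagram, `d(D) + d(-D) + r ≤ c(D)`,
with equality iff `D` has property C. -/
theorem warping_degree_sum_self_crossing (r : ℕ) (n : Fin r → ℕ)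
    (W : ∀ i, List (Fin (n i) × Bool)) (m : Fin r → Fin r → ℕ)
    (hW : ∀ i, IsGaussWord (W i)) (hm : ∀ i, m i i = 0)
    (hself : ∀ i, 1 ≤ n i) :
    linkWd W m + linkWd (fun i => (W i).reverse) m + r ≤ crossingNum n m ∧
    (linkWd W m + linkWd (fun i => (W i).reverse) m + r = crossingNum n m ↔
      PropertyC W m) :=
  warping_degree_sum_self_crossing_general r n W m hW hself
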